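/- Assume d1 < x_T < d2, let x ∈ (d1,d2) and s ∈ [0,T), and suppose (d*,ν*) ∈ {d1,d2}×(s,T) minimizes (d,t) ↦ u(x,s;d,t) over {d1,d2}×(s,T) with u(x,s;d*,ν*) > 0. Then for every v ∈ (s,ν*), setting y = γ_{x,s;d*,ν*}(v), the pair (d*,ν*) is the unique minimizer of (d,t) ↦ u(y,v;d,t) over {d1,d2}×(v,T): for all (d,t) ∈ {d1,d2}×(v,T) with (d,t) ≠ (d*,ν*), one has u(y,v;d,t) > u(y,v;d*,ν*). -/

import Mathlib

/-- The deterministic trajectory `x⁰_{x,s}`. -/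
noncomputable def traj (a0 a1 T xT x s t : ℝ) : ℝ :=
  (x + a0 / a1) * Real.sinh (a1 * (T - t)) / Real.sinh (a1 * (T - s)) +
    (xT + a0 / a1) * Real.sinh (a1 * (t - s)) / Real.sinh (a1 * (T - s)) - a0 / a1

/-- The two-point cost `u(x,s;d,t)`. -/
noncomputable def cost (a0 a1 T xT x s d t : ℝ) : ℝ :=
  a1 * Real.sinh (a1 * (T - s)) * (d - traj a0 a1 T xT x s t) ^ 2 /
    (2 * Real.sinh (a1 * (T - t)) * Real.sinh (a1 * (t - s)))

/-- The extremal path `γ_{x,s;d,t}`. -/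
noncomputable def gammaPath (a0 a1 x s d t v : ℝ) : ℝ :=
  (x + a0 / a1) * Real.sinh (a1 * (t - v)) / Real.sinh (a1 * (t - s)) +
    (d + a0 / a1) * Real.sinh (a1 * (v - s)) / Real.sinh (a1 * (t - s)) - a0 / a1

lemma exp_core (u : ℝ) : Real.sinh u = (Real.exp u ^ 2 - 1) / (2 * Real.exp u) := by
  rw [Real.sinh_eq, Real.exp_neg]
  have := (Real.exp_pos u).ne'
  field_simp

lemma sinh_ne (a1 : ℝ) (ha1 : a1 ≠ 0) {r : ℝ} (hr : r ≠ 0) : Real.sinh (a1*r) ≠ 0 := by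
  intro h
  rw [← Real.sinh_zero] at h
  exact (mul_ne_zero ha1 hr) (Real.sinh_injective h)

lemma mul_sinh_pos (a1 : ℝ) (ha1 : a1 ≠ 0) {r : ℝ} (hr : 0 < r) : 0 < a1 * Real.sinh (a1*r) := by
  rcases ha1.lt_or_gt with h|h
  · have hs : Real.sinh (a1*r) < 0 := by
      rw [← Real.sinh_zero]; exact Real.sinh_lt_sinh.mpr (mul_neg_of_neg_of_pos h hr)
    exact mul_pos_of_neg_of_neg h hs
  · exact mul_pos h (by rw [← Real.sinh_zero]; exact Real.sinh_lt_sinh.mpr (mul_pos h hr))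

lemma sinh_mul_sinh_pos (a1 : ℝ) (ha1 : a1 ≠ 0) {r r' : ℝ} (hr : 0 < r) (hr' : 0 < r') :
    0 < Real.sinh (a1*r) * Real.sinh (a1*r') := by
  rcases ha1.lt_or_gt with h|h
  · have hs : Real.sinh (a1*r) < 0 := by
      rw [← Real.sinh_zero]; exact Real.sinh_lt_sinh.mpr (mul_neg_of_neg_of_pos h hr)
    have hs' : Real.sinh (a1*r') < 0 := by
      rw [← Real.sinh_zero]; exact Real.sinh_lt_sinh.mpr (mul_neg_of_neg_of_pos h hr')
    exact mul_pos_of_neg_of_neg hs hs'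
  · have hs : 0 < Real.sinh (a1*r) := by
      rw [← Real.sinh_zero]; exact Real.sinh_lt_sinh.mpr (mul_pos h hr)
    have hs' : 0 < Real.sinh (a1*r') := by
      rw [← Real.sinh_zero]; exact Real.sinh_lt_sinh.mpr (mul_pos h hr')
    exact mul_pos hs hs'

set_option maxHeartbeats 1000000 in
lemma defect_core (u1 u2 u3 X B D Y : ℝ) :
    (D * Real.sinh (u2+u3) - Y * Real.sinh u3 - B * Real.sinh u2)^2
        * (Real.sinh u1 * Real.sinh (u1+u2) * Real.sinh (u1+u2+u3))
      = (D * Real.sinh (u1+u2+u3) - X * Real.sinh u3 - B * Real.sinh (u1+u2))^2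
          * (Real.sinh u1 * Real.sinh u2 * Real.sinh (u2+u3))
        - (Y * Real.sinh (u1+u2+u3) - X * Real.sinh (u2+u3) - B * Real.sinh u1)^2
          * (Real.sinh u2 * Real.sinh u3 * Real.sinh (u1+u2))
        + (Y * Real.sinh (u1+u2) - X * Real.sinh u2 - D * Real.sinh u1)^2
          * (Real.sinh u3 * Real.sinh (u2+u3) * Real.sinh (u1+u2+u3)) := by
  have p1 := (Real.exp_pos u1).ne'
  have p2 := (Real.exp_pos u2).ne'
  have p3 := (Real.exp_pos u3).ne'
  rw [exp_core u1, exp_core u2, exp_core u3, exp_core (u1+u2), exp_core (u2+u3),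
    exp_core (u1+u2+u3)]
  simp only [Real.exp_add]
  field_simp
  ring

set_option maxHeartbeats 1000000 in
lemma core2 (u1 u2 u3 u4 X B D Ds : ℝ) :
    ((D * Real.sinh (u1+u2+u3+u4) - X * Real.sinh u4 - B * Real.sinh (u1+u2+u3)) * Real.sinh (u1+u2)
        - (Ds * Real.sinh (u1+u2+u3+u4) - X * Real.sinh (u3+u4) - B * Real.sinh (u1+u2)) * Real.sinh (u1+u2+u3))
        * Real.sinh u1
      = ((X * Real.sinh (u2+u3) + D * Real.sinh u1) * Real.sinh (u1+u2)
          - (X * Real.sinh u2 + Ds * Real.sinh u1) * Real.sinh (u1+u2+u3)) * Real.sinh (u1+u2+u3+u4) := by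
  have p1 := (Real.exp_pos u1).ne'
  have p2 := (Real.exp_pos u2).ne'
  have p3 := (Real.exp_pos u3).ne'
  have p4 := (Real.exp_pos u4).ne'
  rw [exp_core u1, exp_core u2, exp_core (u1+u2), exp_core (u2+u3), exp_core (u3+u4),
    exp_core (u1+u2+u3), exp_core (u1+u2+u3+u4), exp_core u4]
  simp only [Real.exp_add]
  field_simp
  ring

lemma id3 (a1 T s t nu : ℝ) :
    Real.sinh (a1*(t-s)) * Real.sinh (a1*(T-nu)) - Real.sinh (a1*(nu-s)) * Real.sinh (a1*(T-t))
      = Real.sinh (a1*(T-s)) * Real.sinh (a1*(t-nu)) := by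
  have p1 := (Real.exp_pos (a1*s)).ne'
  have p2 := (Real.exp_pos (a1*t)).ne'
  have p3 := (Real.exp_pos (a1*T)).ne'
  have p4 := (Real.exp_pos (a1*nu)).ne'
  rw [show a1*(t-s) = a1*t - a1*s by ring, show a1*(T-nu) = a1*T - a1*nu by ring,
    show a1*(nu-s) = a1*nu - a1*s by ring, show a1*(T-t) = a1*T - a1*t by ring,
    show a1*(T-s) = a1*T - a1*s by ring, show a1*(t-nu) = a1*t - a1*nu by ring]
  simp only [Real.sinh_eq, Real.exp_sub, Real.exp_neg]
  field_simp
  ring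

lemma traj_sub (a0 a1 T xT x s d t : ℝ) (ha1 : a1 ≠ 0)
    (h123 : Real.sinh (a1*(T-s)) ≠ 0) :
    d - traj a0 a1 T xT x s t =
      ((d + a0/a1) * Real.sinh (a1*(T-s)) - (x + a0/a1) * Real.sinh (a1*(T-t))
        - (xT + a0/a1) * Real.sinh (a1*(t-s))) / Real.sinh (a1*(T-s)) := by
  unfold traj
  field_simp
  ring

lemma gamma_sub (a0 a1 x s d t v y : ℝ) (ha1 : a1 ≠ 0)
    (h12 : Real.sinh (a1*(t-s)) ≠ 0) :
    y - gammaPath a0 a1 x s d t v =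
      ((y + a0/a1) * Real.sinh (a1*(t-s)) - (x + a0/a1) * Real.sinh (a1*(t-v))
        - (d + a0/a1) * Real.sinh (a1*(v-s))) / Real.sinh (a1*(t-s)) := by
  unfold gammaPath
  field_simp
  ring

lemma cost_eq (a0 a1 T xT x s d t : ℝ) (ha1 : a1 ≠ 0)
    (h3 : Real.sinh (a1*(T-t)) ≠ 0) (h12 : Real.sinh (a1*(t-s)) ≠ 0)
    (h123 : Real.sinh (a1*(T-s)) ≠ 0) :
    cost a0 a1 T xT x s d t =
      a1 * ((d + a0/a1) * Real.sinh (a1*(T-s)) - (x + a0/a1) * Real.sinh (a1*(T-t))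
        - (xT + a0/a1) * Real.sinh (a1*(t-s)))^2
        / (2 * Real.sinh (a1*(T-t)) * Real.sinh (a1*(t-s)) * Real.sinh (a1*(T-s))) := by
  unfold cost traj
  field_simp
  ring

lemma defectA (a0 a1 T xT x s y v d t : ℝ) (ha1 : a1 ≠ 0)
    (h1 : s < v) (h2 : v < t) (h3 : t < T) :
    cost a0 a1 T xT y v d t
      = cost a0 a1 T xT x s d t - cost a0 a1 T xT x s y v
        + a1 * Real.sinh (a1*(t-s)) / (2 * Real.sinh (a1*(v-s)) * Real.sinh (a1*(t-v)))
          * (y - gammaPath a0 a1 x s d t v)^2 := by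
  have n1 : Real.sinh (a1*(v-s)) ≠ 0 := sinh_ne a1 ha1 (sub_ne_zero.mpr h1.ne')
  have n2 : Real.sinh (a1*(t-v)) ≠ 0 := sinh_ne a1 ha1 (sub_ne_zero.mpr h2.ne')
  have n3 : Real.sinh (a1*(T-t)) ≠ 0 := sinh_ne a1 ha1 (sub_ne_zero.mpr h3.ne')
  have n12 : Real.sinh (a1*(t-s)) ≠ 0 := sinh_ne a1 ha1 (sub_ne_zero.mpr (h1.trans h2).ne')
  have n23 : Real.sinh (a1*(T-v)) ≠ 0 := sinh_ne a1 ha1 (sub_ne_zero.mpr (h2.trans h3).ne')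
  have n123 : Real.sinh (a1*(T-s)) ≠ 0 :=
    sinh_ne a1 ha1 (sub_ne_zero.mpr ((h1.trans h2).trans h3).ne')
  have hM : 2 * Real.sinh (a1*(v-s)) * Real.sinh (a1*(t-v)) * Real.sinh (a1*(T-t))
      * Real.sinh (a1*(t-s)) * Real.sinh (a1*(T-v)) * Real.sinh (a1*(T-s)) ≠ 0 :=
    mul_ne_zero (mul_ne_zero (mul_ne_zero (mul_ne_zero (mul_ne_zero
      (mul_ne_zero two_ne_zero n1) n2) n3) n12) n23) n123
  have eL : cost a0 a1 T xT y v d t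
      = a1 * (((d + a0/a1) * Real.sinh (a1*(T-v)) - (y + a0/a1) * Real.sinh (a1*(T-t))
          - (xT + a0/a1) * Real.sinh (a1*(t-v)))^2
          * (Real.sinh (a1*(v-s)) * Real.sinh (a1*(t-s)) * Real.sinh (a1*(T-s))))
        / (2 * Real.sinh (a1*(v-s)) * Real.sinh (a1*(t-v)) * Real.sinh (a1*(T-t))
            * Real.sinh (a1*(t-s)) * Real.sinh (a1*(T-v)) * Real.sinh (a1*(T-s))) := by
    rw [cost_eq a0 a1 T xT y v d t ha1 n3 n2 n23,
      div_eq_div_iff (mul_ne_zero (mul_ne_zero (mul_ne_zero two_ne_zero n3) n2) n23) hM]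
    ring
  have e1 : cost a0 a1 T xT x s d t
      = a1 * (((d + a0/a1) * Real.sinh (a1*(T-s)) - (x + a0/a1) * Real.sinh (a1*(T-t))
          - (xT + a0/a1) * Real.sinh (a1*(t-s)))^2
          * (Real.sinh (a1*(v-s)) * Real.sinh (a1*(t-v)) * Real.sinh (a1*(T-v))))
        / (2 * Real.sinh (a1*(v-s)) * Real.sinh (a1*(t-v)) * Real.sinh (a1*(T-t))
            * Real.sinh (a1*(t-s)) * Real.sinh (a1*(T-v)) * Real.sinh (a1*(T-s))) := by
    rw [cost_eq a0 a1 T xT x s d t ha1 n3 n12 n123,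
      div_eq_div_iff (mul_ne_zero (mul_ne_zero (mul_ne_zero two_ne_zero n3) n12) n123) hM]
    ring
  have e2 : cost a0 a1 T xT x s y v
      = a1 * (((y + a0/a1) * Real.sinh (a1*(T-s)) - (x + a0/a1) * Real.sinh (a1*(T-v))
          - (xT + a0/a1) * Real.sinh (a1*(v-s)))^2
          * (Real.sinh (a1*(t-v)) * Real.sinh (a1*(T-t)) * Real.sinh (a1*(t-s))))
        / (2 * Real.sinh (a1*(v-s)) * Real.sinh (a1*(t-v)) * Real.sinh (a1*(T-t))
            * Real.sinh (a1*(t-s)) * Real.sinh (a1*(T-v)) * Real.sinh (a1*(T-s))) := by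
    rw [cost_eq a0 a1 T xT x s y v ha1 n23 n1 n123,
      div_eq_div_iff (mul_ne_zero (mul_ne_zero (mul_ne_zero two_ne_zero n23) n1) n123) hM]
    ring
  have e3 : a1 * Real.sinh (a1*(t-s)) / (2 * Real.sinh (a1*(v-s)) * Real.sinh (a1*(t-v)))
        * (y - gammaPath a0 a1 x s d t v)^2
      = a1 * (((y + a0/a1) * Real.sinh (a1*(t-s)) - (x + a0/a1) * Real.sinh (a1*(t-v))
          - (d + a0/a1) * Real.sinh (a1*(v-s)))^2
          * (Real.sinh (a1*(T-t)) * Real.sinh (a1*(T-v)) * Real.sinh (a1*(T-s))))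
        / (2 * Real.sinh (a1*(v-s)) * Real.sinh (a1*(t-v)) * Real.sinh (a1*(T-t))
            * Real.sinh (a1*(t-s)) * Real.sinh (a1*(T-v)) * Real.sinh (a1*(T-s))) := by
    rw [gamma_sub a0 a1 x s d t v y ha1 n12, div_pow, div_mul_div_comm,
      div_eq_div_iff (mul_ne_zero (mul_ne_zero (mul_ne_zero two_ne_zero n1) n2)
        (pow_ne_zero 2 n12)) hM]
    ring
  rw [eL, e1, e2, e3, div_sub_div_same, ← add_div]
  have core := defect_core (a1*(v-s)) (a1*(t-v)) (a1*(T-t)) (x + a0/a1) (xT + a0/a1)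
    (d + a0/a1) (y + a0/a1)
  rw [show a1*(v-s) + a1*(t-v) = a1*(t-s) by ring] at core
  rw [show a1*(t-v) + a1*(T-t) = a1*(T-v) by ring] at core
  rw [show a1*(t-s) + a1*(T-t) = a1*(T-s) by ring] at core
  have hnum : a1 * (((d + a0/a1) * Real.sinh (a1*(T-v)) - (y + a0/a1) * Real.sinh (a1*(T-t))
          - (xT + a0/a1) * Real.sinh (a1*(t-v)))^2
          * (Real.sinh (a1*(v-s)) * Real.sinh (a1*(t-s)) * Real.sinh (a1*(T-s))))
      = a1 * (((d + a0/a1) * Real.sinh (a1*(T-s)) - (x + a0/a1) * Real.sinh (a1*(T-t))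
          - (xT + a0/a1) * Real.sinh (a1*(t-s)))^2
          * (Real.sinh (a1*(v-s)) * Real.sinh (a1*(t-v)) * Real.sinh (a1*(T-v))))
        - a1 * (((y + a0/a1) * Real.sinh (a1*(T-s)) - (x + a0/a1) * Real.sinh (a1*(T-v))
          - (xT + a0/a1) * Real.sinh (a1*(v-s)))^2
          * (Real.sinh (a1*(t-v)) * Real.sinh (a1*(T-t)) * Real.sinh (a1*(t-s))))
        + a1 * (((y + a0/a1) * Real.sinh (a1*(t-s)) - (x + a0/a1) * Real.sinh (a1*(t-v))
          - (d + a0/a1) * Real.sinh (a1*(v-s)))^2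
          * (Real.sinh (a1*(T-t)) * Real.sinh (a1*(T-v)) * Real.sinh (a1*(T-s)))) := by
    linear_combination a1 * core
  rw [hnum]

theorem stmt_14 (a0 a1 T xT d1 d2 : ℝ) (ha1 : a1 ≠ 0) (hT : 0 < T)
    (h1 : d1 < xT) (h2 : xT < d2)
    (x s : ℝ) (hx : x ∈ Set.Ioo d1 d2) (hs0 : 0 ≤ s) (hsT : s < T)
    (dstar nustar : ℝ) (hd : dstar = d1 ∨ dstar = d2) (hnu : nustar ∈ Set.Ioo s T)
    (hmin : ∀ d, (d = d1 ∨ d = d2) → ∀ t ∈ Set.Ioo s T,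
      cost a0 a1 T xT x s dstar nustar ≤ cost a0 a1 T xT x s d t)
    (hpos : 0 < cost a0 a1 T xT x s dstar nustar) :
    ∀ v ∈ Set.Ioo s nustar,
      ∀ d, (d = d1 ∨ d = d2) → ∀ t ∈ Set.Ioo v T, (d, t) ≠ (dstar, nustar) →
        cost a0 a1 T xT (gammaPath a0 a1 x s dstar nustar v) v dstar nustar <
          cost a0 a1 T xT (gammaPath a0 a1 x s dstar nustar v) v d t := by
  obtain ⟨hsnu, hnuT⟩ := hnu
  intro v hv d hd' t ht hne
  obtain ⟨hsv, hvnu⟩ := hv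
  obtain ⟨hvt, htT⟩ := ht
  set y := gammaPath a0 a1 x s dstar nustar v with hy
  -- nonzero sinh facts
  have n1 : Real.sinh (a1*(v-s)) ≠ 0 := sinh_ne a1 ha1 (sub_ne_zero.mpr hsv.ne')
  have n12 : Real.sinh (a1*(t-s)) ≠ 0 := sinh_ne a1 ha1 (sub_ne_zero.mpr (hsv.trans hvt).ne')
  have n123 : Real.sinh (a1*(T-s)) ≠ 0 := sinh_ne a1 ha1 (sub_ne_zero.mpr (hsT).ne')
  have n3 : Real.sinh (a1*(T-t)) ≠ 0 := sinh_ne a1 ha1 (sub_ne_zero.mpr htT.ne')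
  have nnus : Real.sinh (a1*(nustar-s)) ≠ 0 := sinh_ne a1 ha1 (sub_ne_zero.mpr hsnu.ne')
  have nTnu : Real.sinh (a1*(T-nustar)) ≠ 0 := sinh_ne a1 ha1 (sub_ne_zero.mpr hnuT.ne')
  -- defect identities
  have hA1 := defectA a0 a1 T xT x s y v d t ha1 hsv hvt htT
  have hA2 := defectA a0 a1 T xT x s y v dstar nustar ha1 hsv hvnu hnuT
  have hz2 : y - gammaPath a0 a1 x s dstar nustar v = 0 := by rw [hy]; exact sub_self _
  have hA2' : cost a0 a1 T xT y v dstar nustar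
      = cost a0 a1 T xT x s dstar nustar - cost a0 a1 T xT x s y v := by
    rw [hA2, hz2]; norm_num
  have hmin' : cost a0 a1 T xT x s dstar nustar ≤ cost a0 a1 T xT x s d t :=
    hmin d hd' t ⟨hsv.trans hvt, htT⟩
  have hK1pos : 0 < a1 * Real.sinh (a1*(t-s)) / (2 * Real.sinh (a1*(v-s)) * Real.sinh (a1*(t-v))) := by
    apply div_pos (mul_sinh_pos a1 ha1 (by linarith : (0:ℝ) < t - s))
    have h := sinh_mul_sinh_pos a1 ha1 (by linarith : (0:ℝ) < v - s) (by linarith : (0:ℝ) < t - v)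
    nlinarith
  rw [hA1, hA2']
  by_cases hcase : y = gammaPath a0 a1 x s d t v
  · -- on-path case: show strict inequality of base costs
    rcases hmin'.lt_or_eq with hlt|heq
    · have hKnn : 0 ≤ a1 * Real.sinh (a1*(t-s)) / (2 * Real.sinh (a1*(v-s)) * Real.sinh (a1*(t-v)))
          * (y - gammaPath a0 a1 x s d t v)^2 :=
        mul_nonneg hK1pos.le (sq_nonneg _)
      linarith
    · exfalso
      -- β ≠ 0
      have hβ : dstar - traj a0 a1 T xT x s nustar ≠ 0 := by
        intro h0
        have hc0 : cost a0 a1 T xT x s dstar nustar = 0 := by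
          unfold cost; rw [h0]; simp
        linarith
      -- the two gamma numerators vanish
      have hz1 : y - gammaPath a0 a1 x s d t v = 0 := by rw [hcase]; exact sub_self _
      rw [gamma_sub a0 a1 x s d t v y ha1 n12] at hz1
      have hz1' := (div_eq_zero_iff.mp hz1).resolve_right n12
      rw [gamma_sub a0 a1 x s dstar nustar v y ha1 nnus] at hz2
      have hz2' := (div_eq_zero_iff.mp hz2).resolve_right nnus
      -- core2 instantiated
      have c2 := core2 (a1*(v-s)) (a1*(nustar-v)) (a1*(t-nustar)) (a1*(T-t))
        (x + a0/a1) (xT + a0/a1) (d + a0/a1) (dstar + a0/a1)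
      rw [show a1*(v-s) + a1*(nustar-v) = a1*(nustar-s) by ring] at c2
      rw [show a1*(nustar-s) + a1*(t-nustar) = a1*(t-s) by ring] at c2
      rw [show a1*(t-s) + a1*(T-t) = a1*(T-s) by ring] at c2
      rw [show a1*(nustar-v) + a1*(t-nustar) = a1*(t-v) by ring] at c2
      rw [show a1*(t-nustar) + a1*(T-t) = a1*(T-nustar) by ring] at c2
      -- numerator relation
      have hnumA : ((d + a0/a1) * Real.sinh (a1*(T-s)) - (x + a0/a1) * Real.sinh (a1*(T-t))
            - (xT + a0/a1) * Real.sinh (a1*(t-s))) * Real.sinh (a1*(nustar-s))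
          - ((dstar + a0/a1) * Real.sinh (a1*(T-s)) - (x + a0/a1) * Real.sinh (a1*(T-nustar))
            - (xT + a0/a1) * Real.sinh (a1*(nustar-s))) * Real.sinh (a1*(t-s)) = 0 := by
        have h0 : (((d + a0/a1) * Real.sinh (a1*(T-s)) - (x + a0/a1) * Real.sinh (a1*(T-t))
              - (xT + a0/a1) * Real.sinh (a1*(t-s))) * Real.sinh (a1*(nustar-s))
            - ((dstar + a0/a1) * Real.sinh (a1*(T-s)) - (x + a0/a1) * Real.sinh (a1*(T-nustar))
              - (xT + a0/a1) * Real.sinh (a1*(nustar-s))) * Real.sinh (a1*(t-s)))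
            * Real.sinh (a1*(v-s)) = 0 := by
          rw [c2]
          linear_combination (-(Real.sinh (a1*(T-s)) * Real.sinh (a1*(nustar-s)))) * hz1'
            + (Real.sinh (a1*(T-s)) * Real.sinh (a1*(t-s))) * hz2'
        exact (mul_eq_zero.mp h0).resolve_right n1
      -- E1 : α S(ν−s) = β S(t−s)
      have E1 : (d - traj a0 a1 T xT x s t) * Real.sinh (a1*(nustar-s))
          = (dstar - traj a0 a1 T xT x s nustar) * Real.sinh (a1*(t-s)) := by
        rw [traj_sub a0 a1 T xT x s d t ha1 n123, traj_sub a0 a1 T xT x s dstar nustar ha1 n123,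
          div_mul_eq_mul_div, div_mul_eq_mul_div, div_eq_div_iff n123 n123]
        linear_combination Real.sinh (a1*(T-s)) * hnumA
      -- cross-multiplied cost equality
      have heq' := heq
      unfold cost at heq'
      rw [div_eq_div_iff (mul_ne_zero (mul_ne_zero two_ne_zero nTnu) nnus)
        (mul_ne_zero (mul_ne_zero two_ne_zero n3) n12)] at heq'
      -- key cancellation
      have hkey : (2*(a1*Real.sinh (a1*(T-s)))*(dstar - traj a0 a1 T xT x s nustar)^2
            *Real.sinh (a1*(t-s)))
          * (Real.sinh (a1*(t-s))*Real.sinh (a1*(T-nustar))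
            - Real.sinh (a1*(nustar-s))*Real.sinh (a1*(T-t))) = 0 := by
        linear_combination (-(Real.sinh (a1*(nustar-s)))) * heq'
          - 2*(a1*Real.sinh (a1*(T-s)))*Real.sinh (a1*(T-nustar))
            *((d - traj a0 a1 T xT x s t)*Real.sinh (a1*(nustar-s))
              + (dstar - traj a0 a1 T xT x s nustar)*Real.sinh (a1*(t-s))) * E1
      have hfac : Real.sinh (a1*(t-s))*Real.sinh (a1*(T-nustar))
          - Real.sinh (a1*(nustar-s))*Real.sinh (a1*(T-t)) = 0 := by
        have hne0 : 2*(a1*Real.sinh (a1*(T-s)))*(dstar - traj a0 a1 T xT x s nustar)^2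
            *Real.sinh (a1*(t-s)) ≠ 0 :=
          mul_ne_zero (mul_ne_zero (mul_ne_zero two_ne_zero (mul_ne_zero ha1 n123))
            (pow_ne_zero 2 hβ)) n12
        exact (mul_eq_zero.mp hkey).resolve_left hne0
      -- t = nustar
      have htnu : t = nustar := by
        have h5 : Real.sinh (a1*(T-s)) * Real.sinh (a1*(t-nustar)) = 0 := by
          rw [← id3 a1 T s t nustar]; exact hfac
        have h6 : Real.sinh (a1*(t-nustar)) = 0 := by
          rcases mul_eq_zero.mp h5 with h|h
          · exact absurd h n123
          · exact h
        rw [← Real.sinh_zero] at h6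
        have h7 := Real.sinh_injective h6
        have h8 : t - nustar = 0 := by
          rcases mul_eq_zero.mp h7 with h|h
          · exact absurd h ha1
          · exact h
        linarith
      subst htnu
      have hd_eq : d = dstar := by
        have := mul_right_cancel₀ nnus E1
        linarith
      exact hne (by rw [hd_eq])
  · have hsq : 0 < a1 * Real.sinh (a1*(t-s)) / (2 * Real.sinh (a1*(v-s)) * Real.sinh (a1*(t-v)))
        * (y - gammaPath a0 a1 x s d t v)^2 :=
      mul_pos hK1pos (pow_two_pos_of_ne_zero (sub_ne_zero.mpr hcase))
    linarith
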